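/- arXiv:1711.08137 — 2 statements merged into one kernel-verified Lean document; each statement's English description precedes it below -/
import Mathlib

section
/- Define the second order difference operator ∇²: ℝ^T → (ℝ³)^T by (∇²u)_τ = ([[u]]_{l₀,τ}, [[u]]_{l₁,τ}, [[u]]_{l₂,τ}) with [[u]]_{l_j,τ} = u_{τ_j⁺} + u_{τ_j⁻} - 2u_τ (set to 0 if either adjacent edge is a boundary edge). With inner products (u¹,u²)_V = Σ_τ u¹_τ u²_τ s_τ and (p¹,p²)_P = Σ_τ Σ_{l ∈ B₁(τ)} p¹_l p²_l len(l), the adjoint operator (∇²)*: P_M → V_M is given by ((∇²)*p)_τ = (1/s_τ)(Σ_{l ∈ B₂(τ), interior} p_l len(l) - 2 Σ_{l ∈ B₁(τ), interior} p_l len(l)), where B₁(τ) is the set of three barycenter–vertex lines of τ and B₂(τ) is the set of lines connecting vertices of τ to barycenters of the 1-ring triangles whose second-order stencil involves τ as a neighbor. That is, (∇²u, p)_P = (u, (∇²)*p)_V for all u ∈ ℝ^T, p ∈ P_M. -/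
/-!
Summation by parts: in `(∇²u, p)_P` each neighbour term `u(τ±) p_l len(l)` is regrouped
under the triangle at which `u` is evaluated, which produces the `B₂(τ)`-sum, while the
`-2 u_τ` terms stay at their own triangle and produce the `B₁(τ)`-sum. The area weight `s_τ`
of the `V`-inner product cancels the factor `1 / s_τ` of `(∇²)^⋆`.
-/

open Finset

theorem sum_comp_mul_eq_sum_mul_sum_fiber {α T : Type*} [Fintype α] [Fintype T] [DecidableEq T]
    (g : α → T) (u : T → ℝ) (c : α → ℝ) :
    ∑ a, u (g a) * c a = ∑ τ, u τ * ∑ a, if g a = τ then c a else 0 := by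
  simp_rw [mul_sum, mul_ite, mul_zero]
  rw [sum_comm]
  exact sum_congr rfl fun a _ => (Fintype.sum_ite_eq (g a) (u · * c a)).symm

theorem sum_stencil_neighbors_eq_sum_mul_sum_fiber {T : Type*} [Fintype T] [DecidableEq T]
    (interior : T → Fin 3 → Prop) [∀ τ j, Decidable (interior τ j)]
    (nbr : T → Fin 3 → Fin 2 → T) (u : T → ℝ) (q : T → Fin 3 → ℝ) :
    ∑ σ, ∑ j, (if interior σ j then (u (nbr σ j 0) + u (nbr σ j 1)) * q σ j else 0) =
      ∑ τ, u τ * ∑ σ, ∑ j, ∑ k : Fin 2,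
        if interior σ j ∧ nbr σ j k = τ then q σ j else 0 := by
  have h := sum_comp_mul_eq_sum_mul_sum_fiber (fun x : T × Fin 3 × Fin 2 => nbr x.1 x.2.1 x.2.2) u
    (fun x => if interior x.1 x.2.1 then q x.1 x.2.1 else 0)
  simp only [Fintype.sum_prod_type, ← ite_and, and_comm] at h
  convert h using 3 with σ _ j
  split_ifs <;> simp [Fin.sum_univ_two, add_mul]

theorem second_order_adjoint_formula_general
    {T : Type*} [Fintype T] [DecidableEq T]
    (s : T → ℝ) (hs : ∀ τ, 0 < s τ)
    (lenl : T → Fin 3 → ℝ)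
    (interior : T → Fin 3 → Prop) [∀ τ j, Decidable (interior τ j)]
    (nbr : T → Fin 3 → Fin 2 → T)
    (D2 : (T → ℝ) → T → Fin 3 → ℝ)
    (hD2 : ∀ u τ j, D2 u τ j =
      if interior τ j then u (nbr τ j 0) + u (nbr τ j 1) - 2 * u τ else 0)
    (adj : (T → Fin 3 → ℝ) → T → ℝ)
    (hadj : ∀ p τ, adj p τ = (1 / s τ) *
      ((∑ σ, ∑ j, ∑ k : Fin 2,
          if interior σ j ∧ nbr σ j k = τ then p σ j * lenl σ j else 0)
        - 2 * ∑ j, if interior τ j then p τ j * lenl τ j else 0)) :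
    ∀ (u : T → ℝ) (p : T → Fin 3 → ℝ),
      ∑ τ, ∑ j, D2 u τ j * p τ j * lenl τ j = ∑ τ, u τ * adj p τ * s τ := by
  intro u p
  have hD2_split : ∀ τ j, D2 u τ j * p τ j * lenl τ j =
      (if interior τ j then (u (nbr τ j 0) + u (nbr τ j 1)) * (p τ j * lenl τ j) else 0)
        - u τ * (2 * if interior τ j then p τ j * lenl τ j else 0) := by
    intro τ j
    rw [hD2]
    split_ifs <;> ring
  have hadj_cancel : ∀ τ, u τ * adj p τ * s τ =
      u τ * (∑ σ, ∑ j, ∑ k : Fin 2,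
          if interior σ j ∧ nbr σ j k = τ then p σ j * lenl σ j else 0)
        - u τ * (2 * ∑ j, if interior τ j then p τ j * lenl τ j else 0) := by
    intro τ
    rw [hadj]
    field_simp [(hs τ).ne']
  simp only [hD2_split, hadj_cancel, sum_sub_distrib,
    sum_stencil_neighbors_eq_sum_mul_sum_fiber, mul_sum]

/-- Adjoint of the second order difference operator `∇²` in the piecewise constant
calculus: `(∇²u, p)_P = (u, (∇²)^⋆ p)_V`, where lines are indexed by pairs
`(τ, j)`, `j : Fin 3` (the three barycenter–vertex lines `B₁(τ)` of `τ`),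
`nbr τ j k` (`k : Fin 2`) are the two neighboring triangles `τ⁺, τ⁻` in the
stencil of line `(τ, j)`, and the `B₂(τ)`-sum collects (with multiplicity) all
interior lines whose stencil involves `τ` as a neighbor. -/
theorem second_order_adjoint_formula
    {T : Type*} [Fintype T] [DecidableEq T]
    (s : T → ℝ) (hs : ∀ τ, 0 < s τ)
    (lenl : T → Fin 3 → ℝ) (hlen : ∀ τ j, 0 < lenl τ j)
    (interior : T → Fin 3 → Prop) [∀ τ j, Decidable (interior τ j)]
    (nbr : T → Fin 3 → Fin 2 → T)
    (D2 : (T → ℝ) → T → Fin 3 → ℝ)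
    (hD2 : ∀ u τ j, D2 u τ j =
      if interior τ j then u (nbr τ j 0) + u (nbr τ j 1) - 2 * u τ else 0)
    (adj : (T → Fin 3 → ℝ) → T → ℝ)
    (hadj : ∀ p τ, adj p τ = (1 / s τ) *
      ((∑ σ, ∑ j, ∑ k : Fin 2,
          if interior σ j ∧ nbr σ j k = τ then p σ j * lenl σ j else 0)
        - 2 * ∑ j, if interior τ j then p τ j * lenl τ j else 0)) :
    ∀ (u : T → ℝ) (p : T → Fin 3 → ℝ),
      ∑ τ, ∑ j, D2 u τ j * p τ j * lenl τ j = ∑ τ, u τ * adj p τ * s τ :=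
  second_order_adjoint_formula_general s hs lenl interior nbr D2 hD2 adj hadj
end

section
/- The ℓ¹-Laplacian regularizer R_lap(u) = Σ_τ |Δu|_τ| s_τ and the second order regularizer R_ho(u) = Σ_l |[[u]]_l| len(l) satisfy: there exists a constant C > 0 (depending on the mesh geometry: areas, edge lengths, line lengths) such that R_lap(u) ≤ C · R_ho(u) for all u ∈ ℝ^T on a closed triangulated surface where each triangle has exactly three neighbors. In particular, R_ho(u) = 0 implies R_lap(u) = 0. -/
set_option maxHeartbeats 1000000

open Finset

private lemma tri_key (a b c e0 e1 e2 l0 l1 l2 : ℝ)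
    (he0 : 0 < e0) (he1 : 0 < e1) (he2 : 0 < e2)
    (hl0 : 0 < l0) (hl1 : 0 < l1) (hl2 : 0 < l2) :
    |a * e0 + b * e1 + c * e2| ≤
      (3/2) * (e0+e1+e2) * (l0⁻¹+l1⁻¹+l2⁻¹) *
        (|b + c| * l0 + |a + c| * l1 + |a + b| * l2) := by
  set A0 := |b + c| with hA0
  set A1 := |a + c| with hA1
  set A2 := |a + b| with hA2
  have hA0n : 0 ≤ A0 := abs_nonneg _
  have hA1n : 0 ≤ A1 := abs_nonneg _
  have hA2n : 0 ≤ A2 := abs_nonneg _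
  have f0 : b + c ≤ A0 := le_abs_self _
  have f0' : -A0 ≤ b + c := neg_abs_le _
  have f1 : a + c ≤ A1 := le_abs_self _
  have f1' : -A1 ≤ a + c := neg_abs_le _
  have f2 : a + b ≤ A2 := le_abs_self _
  have f2' : -A2 ≤ a + b := neg_abs_le _
  have ha : |a| ≤ (A0+A1+A2)/2 := abs_le.2 ⟨by linarith, by linarith⟩
  have hb : |b| ≤ (A0+A1+A2)/2 := abs_le.2 ⟨by linarith, by linarith⟩
  have hc : |c| ≤ (A0+A1+A2)/2 := abs_le.2 ⟨by linarith, by linarith⟩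
  have h1 : |a * e0 + b * e1 + c * e2| ≤ |a| * e0 + |b| * e1 + |c| * e2 := by
    calc |a * e0 + b * e1 + c * e2| ≤ |a * e0 + b * e1| + |c * e2| := abs_add_le _ _
      _ ≤ |a * e0| + |b * e1| + |c * e2| := by linarith [abs_add_le (a*e0) (b*e1)]
      _ = |a| * e0 + |b| * e1 + |c| * e2 := by
          rw [abs_mul, abs_mul, abs_mul, abs_of_pos he0, abs_of_pos he1, abs_of_pos he2]
  have hT : A0 + A1 + A2 ≤ (l0⁻¹+l1⁻¹+l2⁻¹) * (A0*l0 + A1*l1 + A2*l2) := by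
    have g0 : l0⁻¹ * (A0*l0) = A0 := by field_simp
    have g1 : l1⁻¹ * (A1*l1) = A1 := by field_simp
    have g2 : l2⁻¹ * (A2*l2) = A2 := by field_simp
    have := mul_nonneg (inv_nonneg.2 hl0.le) (mul_nonneg hA1n hl1.le)
    have := mul_nonneg (inv_nonneg.2 hl0.le) (mul_nonneg hA2n hl2.le)
    have := mul_nonneg (inv_nonneg.2 hl1.le) (mul_nonneg hA0n hl0.le)
    have := mul_nonneg (inv_nonneg.2 hl1.le) (mul_nonneg hA2n hl2.le)
    have := mul_nonneg (inv_nonneg.2 hl2.le) (mul_nonneg hA0n hl0.le)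
    have := mul_nonneg (inv_nonneg.2 hl2.le) (mul_nonneg hA1n hl1.le)
    nlinarith [g0, g1, g2]
  have hE : 0 ≤ e0 + e1 + e2 := by linarith
  have h2 : |a| * e0 + |b| * e1 + |c| * e2 ≤ (A0+A1+A2)/2 * (e0+e1+e2) := by
    nlinarith [mul_le_mul_of_nonneg_right ha he0.le,
      mul_le_mul_of_nonneg_right hb he1.le,
      mul_le_mul_of_nonneg_right hc he2.le, abs_nonneg a, abs_nonneg b, abs_nonneg c]
  have h3 := mul_le_mul_of_nonneg_right hT hE
  calc |a * e0 + b * e1 + c * e2| ≤ (A0+A1+A2)/2 * (e0+e1+e2) := le_trans h1 h2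
    _ ≤ (3/2) * (e0+e1+e2) * (l0⁻¹+l1⁻¹+l2⁻¹) * (A0*l0 + A1*l1 + A2*l2) := by nlinarith [h3]

/-- On a closed triangulated surface where each triangle has exactly three
neighbors, the ℓ¹-Laplacian regularizer is dominated by the second order
regularizer: `∃ C > 0, R_lap(u) ≤ C · R_ho(u)` for all `u`; in particular
`R_ho(u) = 0` implies `R_lap(u) = 0`. Here
`Δu|_τ = -(1/s_τ) Σ_j (u_τ - u_{nbr τ j}) lenE(τ,j)` and each second order
difference `[[u]]_{l_j,τ}` is the sum of the two neighbor differences other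
than the `j`-th. -/
theorem laplacian_dominated_by_second_order
    {T : Type*} [Fintype T]
    (s : T → ℝ) (hs : ∀ τ, 0 < s τ)
    (nbr : T → Fin 3 → T)
    (lenE : T → Fin 3 → ℝ) (hlenE : ∀ τ j, 0 < lenE τ j)
    (lenL : T → Fin 3 → ℝ) (hlenL : ∀ τ j, 0 < lenL τ j)
    (lap : (T → ℝ) → T → ℝ)
    (hlap : ∀ u τ, lap u τ =
      -(1 / s τ) * ∑ j, (u τ - u (nbr τ j)) * lenE τ j)
    (D2 : (T → ℝ) → T → Fin 3 → ℝ)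
    (hD2 : ∀ u τ j, D2 u τ j =
      (∑ k, (u (nbr τ k) - u τ)) - (u (nbr τ j) - u τ))
    (Rlap Rho : (T → ℝ) → ℝ)
    (hRlap : ∀ u, Rlap u = ∑ τ, |lap u τ| * s τ)
    (hRho : ∀ u, Rho u = ∑ τ, ∑ j, |D2 u τ j| * lenL τ j) :
    (∃ C : ℝ, 0 < C ∧ ∀ u : T → ℝ, Rlap u ≤ C * Rho u) ∧
    (∀ u : T → ℝ, Rho u = 0 → Rlap u = 0) := by
  set c : T → ℝ := fun τ =>
    (3/2) * (lenE τ 0 + lenE τ 1 + lenE τ 2) *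
      ((lenL τ 0)⁻¹ + (lenL τ 1)⁻¹ + (lenL τ 2)⁻¹) with hcdef
  have hc0 : ∀ τ, 0 ≤ c τ := by
    intro τ
    have h1 : (0:ℝ) ≤ lenE τ 0 + lenE τ 1 + lenE τ 2 := by
      have := hlenE τ 0; have := hlenE τ 1; have := hlenE τ 2; linarith
    have h2 : (0:ℝ) ≤ (lenL τ 0)⁻¹ + (lenL τ 1)⁻¹ + (lenL τ 2)⁻¹ := by
      have := inv_nonneg.2 (hlenL τ 0).le
      have := inv_nonneg.2 (hlenL τ 1).le
      have := inv_nonneg.2 (hlenL τ 2).le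
      linarith
    have : (0:ℝ) ≤ (3/2) := by norm_num
    exact mul_nonneg (mul_nonneg this h1) h2
  set C : ℝ := 1 + ∑ τ, c τ with hCdef
  have hsumc : 0 ≤ ∑ τ, c τ := Finset.sum_nonneg fun τ _ => hc0 τ
  have hCpos : 0 < C := by rw [hCdef]; linarith
  have hXnonneg : ∀ u τ, 0 ≤ ∑ j, |D2 u τ j| * lenL τ j := fun u τ =>
    Finset.sum_nonneg fun j _ => mul_nonneg (abs_nonneg _) (hlenL τ j).le
  have key : ∀ u τ, |lap u τ| * s τ ≤ c τ * ∑ j, |D2 u τ j| * lenL τ j := by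
    intro u τ
    set a := u (nbr τ 0) - u τ with hadef
    set b := u (nbr τ 1) - u τ with hbdef
    set c' := u (nbr τ 2) - u τ with hc'def
    have hlapv : lap u τ = (a * lenE τ 0 + b * lenE τ 1 + c' * lenE τ 2) / s τ := by
      rw [hlap, Fin.sum_univ_three]
      field_simp
      ring
    have hls : |lap u τ| * s τ = |a * lenE τ 0 + b * lenE τ 1 + c' * lenE τ 2| := by
      rw [hlapv, abs_div, abs_of_pos (hs τ), div_mul_cancel₀ _ (hs τ).ne']
    have hD0 : D2 u τ 0 = b + c' := by rw [hD2, Fin.sum_univ_three]; ring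
    have hD1 : D2 u τ 1 = a + c' := by rw [hD2, Fin.sum_univ_three]; ring
    have hD2' : D2 u τ 2 = a + b := by rw [hD2, Fin.sum_univ_three]; ring
    have hX : ∑ j, |D2 u τ j| * lenL τ j =
        |b + c'| * lenL τ 0 + |a + c'| * lenL τ 1 + |a + b| * lenL τ 2 := by
      rw [Fin.sum_univ_three, hD0, hD1, hD2']
    rw [hls, hX, hcdef]
    exact tri_key a b c' _ _ _ _ _ _ (hlenE τ 0) (hlenE τ 1) (hlenE τ 2)
      (hlenL τ 0) (hlenL τ 1) (hlenL τ 2)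
  have main : ∀ u : T → ℝ, Rlap u ≤ C * Rho u := by
    intro u
    rw [hRlap, hRho, Finset.mul_sum]
    apply Finset.sum_le_sum
    intro τ _
    calc |lap u τ| * s τ ≤ c τ * ∑ j, |D2 u τ j| * lenL τ j := key u τ
      _ ≤ C * ∑ j, |D2 u τ j| * lenL τ j := by
          apply mul_le_mul_of_nonneg_right _ (hXnonneg u τ)
          have := Finset.single_le_sum (fun τ' _ => hc0 τ') (Finset.mem_univ τ)
          rw [hCdef]; linarith
  refine ⟨⟨C, hCpos, main⟩, ?_⟩
  intro u h0
  have h1 := main u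
  rw [h0, mul_zero] at h1
  have h2 : 0 ≤ Rlap u := by
    rw [hRlap]
    exact Finset.sum_nonneg fun τ _ => mul_nonneg (abs_nonneg _) (hs τ).le
  linarith
end
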